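/- Let G be an out-regular degree-2 k-geodetic digraph of order M(2,k)+2 (k ≥ 2) with in-degree sequence such that |S|=4 (four vertices of in-degree 1), and suppose some vertex v' has in-degree 4. Then S = N^-(v'), every outlier set is contained in S, and if Ω ⊂ S is an outlier set of some vertex then S − Ω is also the outlier set of some vertex. -/

import Mathlib

/-- Moore bound `M(d,k) = 1 + d + ... + d^k`. -/
def moore (d k : ℕ) : ℕ := ∑ i ∈ Finset.range (k + 1), d ^ i

/-- Moore bound with integer argument, with the convention `M(d,k) = 0` for `k < 0`. -/
def mooreZ (d : ℕ) (j : ℤ) : ℕ := if j < 0 then 0 else moore d j.toNat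

/-- Walks of length at most `k` from `u` to `v` in the digraph with arc relation `A`,
encoded as vertex lists (so a walk of length `≤ k` is a list of length `≤ k+1`). -/
def walksUpTo {V : Type*} (A : V → V → Prop) (k : ℕ) (u v : V) : Set (List V) :=
  {l | l.Chain' A ∧ l.head? = some u ∧ l.getLast? = some v ∧ l.length ≤ k + 1}

/-- A digraph is `k`-geodetic if between any ordered pair of vertices there is at most
one directed walk of length at most `k`. -/
def IsGeodetic {V : Type*} (A : V → V → Prop) (k : ℕ) : Prop :=
  ∀ u v : V, (walksUpTo A k u v).Subsingleton

/-- `v` is reachable from `u` by a directed walk of length at most `k`. -/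
def reachIn {V : Type*} (A : V → V → Prop) (k : ℕ) (u v : V) : Prop :=
  (walksUpTo A k u v).Nonempty

/-- Out-degree of a vertex. -/
noncomputable def outDeg {V : Type*} (A : V → V → Prop) (u : V) : ℕ := {v | A u v}.ncard

/-- In-degree of a vertex. -/
noncomputable def inDeg {V : Type*} (A : V → V → Prop) (v : V) : ℕ := {u | A u v}.ncard

/-- The outlier set `O(u)`: vertices not reachable from `u` within distance `k`. -/
def outlier {V : Type*} (A : V → V → Prop) (k : ℕ) (u : V) : Set V :=
  {v | ¬ reachIn A k u v}

/-! Out-regularity of degree 2 and `k`-geodeticity force the ball of radius `k` around every vertex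
to have exactly `M(2,k)` vertices, so every outlier set has two elements. A vertex of in-degree
at most one is never within distance `k` of both out-neighbours `u₁ ≠ u₂` of a vertex `u`: the
two walks enter it through its unique in-neighbour `p`, giving two short walks from `u` to `p`.
Hence `S ⊆ O(u₁) ∪ O(u₂)`, and counting gives `S = O(u₁) ⊔ O(u₂)`. A source would lie in the
outlier sets of both its out-neighbours, so every vertex `u` has an in-neighbour, and `O(u)` is
one half of the partition of `S` it induces. Finally, a vertex `x ∉ N⁻(v')` reaches at most one
in-neighbour of `v'` through each of its two out-neighbours, so `O(x)` consists of the two it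
misses; the out-neighbours of an in-neighbour of `v'` are not in `N⁻(v')`, so `S ⊆ N⁻(v')`, and
both sets have four elements. -/

lemma moore_succ (d k : ℕ) : moore d (k + 1) = 1 + d * moore d k := by
  simp only [moore, Finset.sum_range_succ' _ (k + 1), Finset.mul_sum, pow_succ']
  ring

lemma Set.eq_union_and_disjoint_of_subset_union {α : Type*} {s a b : Set α} (ha : a.Finite)
    (hb : b.Finite) (hsub : s ⊆ a ∪ b) (hcard : a.ncard + b.ncard ≤ s.ncard) :
    s = a ∪ b ∧ Disjoint a b := by
  have hs : s = a ∪ b :=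
    Set.eq_of_subset_of_ncard_le hsub ((Set.ncard_union_le a b).trans hcard) (ha.union hb)
  refine ⟨hs, (Set.ncard_union_eq_iff ha hb).mp (le_antisymm (Set.ncard_union_le a b) ?_)⟩
  exact hs ▸ hcard

section

variable {V : Type*} {A : V → V → Prop} {k : ℕ} {u v w : V}

lemma walksUpTo_mono {l : ℕ} (hkl : k ≤ l) : walksUpTo A k u v ⊆ walksUpTo A l u v :=
  fun _ ⟨hc, hh, hlast, hlen⟩ => ⟨hc, hh, hlast, by omega⟩

lemma singleton_mem_walksUpTo (A : V → V → Prop) (k : ℕ) (u : V) :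
    [u] ∈ walksUpTo A k u u :=
  ⟨List.isChain_singleton u, rfl, rfl, by simp⟩

lemma cons_mem_walksUpTo (huw : A u w) {l : List V} (hl : l ∈ walksUpTo A k w v) :
    u :: l ∈ walksUpTo A (k + 1) u v := by
  obtain ⟨hc, hh, hlast, hlen⟩ := hl
  cases l with
  | nil => simp at hh
  | cons a l =>
    obtain rfl : a = w := by simpa using hh
    exact ⟨List.isChain_cons_cons.mpr ⟨huw, hc⟩, rfl, by simpa using hlast,
      by simpa using hlen⟩

lemma append_mem_walksUpTo {l : List V} (hl : l ∈ walksUpTo A k u w) (hwv : A w v) :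
    l ++ [v] ∈ walksUpTo A (k + 1) u v := by
  obtain ⟨hc, hh, hlast, hlen⟩ := hl
  refine ⟨List.isChain_append.mpr ⟨hc, List.isChain_singleton v, ?_⟩, ?_, by simp, by simpa⟩
  · simp [hlast, hwv]
  · simp [List.head?_append, hh]

lemma IsGeodetic.mono {l : ℕ} (h : IsGeodetic A l) (hkl : k ≤ l) : IsGeodetic A k :=
  fun u v _ h₁ _ h₂ => h u v (walksUpTo_mono hkl h₁) (walksUpTo_mono hkl h₂)

lemma reachIn_zero : reachIn A 0 u v ↔ u = v := by
  constructor
  · rintro ⟨l, -, hh, hlast, hlen⟩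
    match l, hlen with
    | [], _ => simp at hh
    | [a], _ => simp_all
  · rintro rfl
    exact ⟨_, singleton_mem_walksUpTo A 0 u⟩

lemma reachIn_succ : reachIn A (k + 1) u v ↔ u = v ∨ ∃ w, A u w ∧ reachIn A k w v := by
  constructor
  · rintro ⟨l, hc, hh, hlast, hlen⟩
    match l, hh with
    | [a], hh => left; simp_all
    | a :: b :: l, hh =>
      obtain rfl : a = u := by simpa using hh
      obtain ⟨hab, hc⟩ := List.isChain_cons_cons.mp hc
      exact Or.inr ⟨b, hab, b :: l, hc, rfl, by simpa using hlast, by simp at hlen ⊢; omega⟩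
  · rintro (rfl | ⟨w, huw, l, hl⟩)
    · exact ⟨_, singleton_mem_walksUpTo A _ u⟩
    · exact ⟨_, cons_mem_walksUpTo huw hl⟩

lemma reachIn_succ' : reachIn A (k + 1) u v ↔ u = v ∨ ∃ w, reachIn A k u w ∧ A w v := by
  induction k generalizing u with
  | zero => simp [reachIn_succ, reachIn_zero]
  | succ k ih =>
    conv_lhs => rw [reachIn_succ]; simp only [ih]
    conv_rhs => simp only [reachIn_succ]
    constructor
    · rintro (rfl | ⟨w, huw, rfl | ⟨t, hwt, htv⟩⟩)
      · exact Or.inl rfl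
      · exact Or.inr ⟨u, Or.inl rfl, huw⟩
      · exact Or.inr ⟨t, Or.inr ⟨w, huw, hwt⟩, htv⟩
    · rintro (rfl | ⟨t, rfl | ⟨w, huw, hwt⟩, htv⟩)
      · exact Or.inl rfl
      · exact Or.inr ⟨v, htv, Or.inl rfl⟩
      · exact Or.inr ⟨w, huw, Or.inr ⟨t, hwt, htv⟩⟩

lemma IsGeodetic.eq_of_adj_of_reachIn (hgeo : IsGeodetic A (k + 1)) {w₁ w₂ : V}
    (h₁ : A u w₁) (h₂ : A u w₂) (hr₁ : reachIn A k w₁ v) (hr₂ : reachIn A k w₂ v) :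
    w₁ = w₂ := by
  obtain ⟨l₁, hl₁⟩ := hr₁
  obtain ⟨l₂, hl₂⟩ := hr₂
  have hl : l₁ = l₂ := List.cons_injective
    (hgeo u v (cons_mem_walksUpTo h₁ hl₁) (cons_mem_walksUpTo h₂ hl₂))
  exact Option.some_injective _ (hl₁.2.1.symm.trans (hl ▸ hl₂.2.1))

lemma IsGeodetic.not_reachIn_of_adj (hgeo : IsGeodetic A (k + 1)) (huw : A u w) :
    ¬ reachIn A k w u := by
  rintro ⟨l, hl⟩
  have := hgeo u u (singleton_mem_walksUpTo A _ u) (cons_mem_walksUpTo huw hl)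
  simp_all [walksUpTo]

lemma IsGeodetic.eq_of_reachIn_of_adj (hgeo : IsGeodetic A (k + 1)) {t₁ t₂ : V}
    (hr₁ : reachIn A k u t₁) (hr₂ : reachIn A k u t₂) (h₁ : A t₁ v) (h₂ : A t₂ v) :
    t₁ = t₂ := by
  obtain ⟨l₁, hl₁⟩ := hr₁
  obtain ⟨l₂, hl₂⟩ := hr₂
  have hl : l₁ = l₂ := List.append_cancel_right
    (hgeo u v (append_mem_walksUpTo hl₁ h₁) (append_mem_walksUpTo hl₂ h₂))
  exact Option.some_injective _ (hl₁.2.2.1.symm.trans (hl ▸ hl₂.2.2.1))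

lemma IsGeodetic.not_adj_of_adj_of_adj (hgeo : IsGeodetic A k) (hk : 2 ≤ k)
    (huw : A u w) (hwv : A w v) : ¬ A u v := by
  intro huv
  have hshort : [u, v] ∈ walksUpTo A k u v :=
    walksUpTo_mono (by omega) (cons_mem_walksUpTo huv (singleton_mem_walksUpTo A 0 v))
  have hlong : [u, w, v] ∈ walksUpTo A k u v :=
    walksUpTo_mono hk
      (cons_mem_walksUpTo huw (cons_mem_walksUpTo hwv (singleton_mem_walksUpTo A 0 v)))
  simpa using congrArg List.length (hgeo u v hshort hlong)

lemma IsGeodetic.ncard_reachIn [Finite V] {d : ℕ} (hgeo : IsGeodetic A k)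
    (hout : ∀ u, outDeg A u = d) (u : V) : {v | reachIn A k u v}.ncard = moore d k := by
  induction k generalizing u with
  | zero => simp [reachIn_zero, moore]
  | succ k ih =>
    have hball : {v | reachIn A (k + 1) u v} =
        insert u (⋃ w ∈ {w | A u w}, {v | reachIn A k w v}) := by
      ext v; simp [reachIn_succ, eq_comm]
    have hu : u ∉ ⋃ w ∈ {w | A u w}, {v | reachIn A k w v} := by
      simp only [Set.mem_iUnion, Set.mem_ofPred_eq, not_exists]
      exact fun w huw => hgeo.not_reachIn_of_adj huw
    have hdisj : {w | A u w}.PairwiseDisjoint fun w => {v | reachIn A k w v} :=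
      fun w₁ h₁ w₂ h₂ hne => Set.disjoint_left.mpr fun v hv₁ hv₂ =>
        hne (hgeo.eq_of_adj_of_reachIn h₁ h₂ hv₁ hv₂)
    rw [hball, Set.ncard_insert_of_notMem hu,
      (Set.toFinite _).ncard_biUnion (fun _ _ => Set.toFinite _) hdisj,
      finsum_mem_congr rfl fun w _ => ih (hgeo.mono k.le_succ) w,
      finsum_mem_eq_finite_toFinset_sum _ (Set.toFinite _), Finset.sum_const, smul_eq_mul,
      ← Set.ncard_eq_toFinset_card _ (Set.toFinite _)]
    have : {w | A u w}.ncard = d := hout u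
    rw [this, moore_succ, add_comm]

lemma IsGeodetic.ncard_outlier [Fintype V] {d m : ℕ} (hgeo : IsGeodetic A k)
    (hout : ∀ u, outDeg A u = d) (hcard : Fintype.card V = moore d k + m) (u : V) :
    (outlier A k u).ncard = m := by
  have := Set.ncard_add_ncard_compl {v | reachIn A k u v}
  rw [hgeo.ncard_reachIn hout, Nat.card_eq_fintype_card, hcard] at this
  exact Nat.add_left_cancel this

lemma eq_of_forall_not_adj_of_reachIn (hv : ∀ p, ¬ A p v) (h : reachIn A k u v) : u = v := by
  cases k with
  | zero => exact reachIn_zero.mp h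
  | succ k => simpa [hv] using reachIn_succ'.mp h

lemma IsGeodetic.mem_outlier_union_of_adj (hgeo : IsGeodetic A k) {s u₁ u₂ : V}
    (hs : {p | A p s}.Subsingleton) (h₁ : A u u₁) (h₂ : A u u₂) (hne : u₁ ≠ u₂) :
    s ∈ outlier A k u₁ ∪ outlier A k u₂ := by
  by_contra! hmem
  simp only [Set.mem_union, outlier, Set.mem_ofPred_eq, not_or, not_not] at hmem
  obtain ⟨hr₁, hr₂⟩ := hmem
  cases k with
  | zero => exact hne ((reachIn_zero.mp hr₁).trans (reachIn_zero.mp hr₂).symm)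
  | succ k =>
    rcases reachIn_succ'.mp hr₁ with rfl | ⟨p₁, hp₁, hA₁⟩ <;>
      rcases reachIn_succ'.mp hr₂ with rfl | ⟨p₂, hp₂, hA₂⟩
    · exact hne rfl
    · exact hgeo.not_reachIn_of_adj h₂ (hs h₁ hA₂ ▸ hp₂)
    · exact hgeo.not_reachIn_of_adj h₁ (hs h₂ hA₁ ▸ hp₁)
    · exact hne (hgeo.eq_of_adj_of_reachIn h₁ h₂ hp₁ (hs hA₂ hA₁ ▸ hp₂))

lemma IsGeodetic.ncard_inter_reachIn_le [Finite V] {x : V} (hgeo : IsGeodetic A (k + 1))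
    (hx : ¬ A x v) : ({t | A t v} ∩ {t | reachIn A (k + 1) x t}).ncard ≤ outDeg A x := by
  have hvia : ∀ t ∈ {t | A t v} ∩ {t | reachIn A (k + 1) x t},
      ∃ w, A x w ∧ reachIn A k w t := by
    rintro t ⟨htv, hxt⟩
    rcases reachIn_succ.mp hxt with rfl | hw
    · exact absurd htv hx
    · exact hw
  choose! g hgx hgt using hvia
  refine Set.ncard_le_ncard_of_injOn g hgx (fun t₁ ht₁ t₂ ht₂ hg => ?_) (Set.toFinite _)
  exact hgeo.eq_of_reachIn_of_adj (hgt t₁ ht₁) (hg ▸ hgt t₂ ht₂) ht₁.1 ht₂.1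

lemma IsGeodetic.outlier_subset_of_not_adj [Finite V] {x : V} (hgeo : IsGeodetic A (k + 1))
    (hx : ¬ A x v) (hv : outDeg A x + (outlier A (k + 1) x).ncard ≤ inDeg A v) :
    outlier A (k + 1) x ⊆ {t | A t v} := by
  have hsplit := Set.ncard_inter_add_ncard_sdiff_eq_ncard {t | A t v} (outlier A (k + 1) x)
  have hreach : {t | A t v} \ outlier A (k + 1) x =
      {t | A t v} ∩ {t | reachIn A (k + 1) x t} := by
    ext t; simp [outlier]
  rw [hreach] at hsplit
  have hle := hgeo.ncard_inter_reachIn_le hx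
  have hin : inDeg A v = {t | A t v}.ncard := rfl
  have heq : {t | A t v} ∩ outlier A (k + 1) x = outlier A (k + 1) x :=
    Set.eq_of_subset_of_ncard_le Set.inter_subset_right (by omega)
  exact heq ▸ Set.inter_subset_left

lemma exists_adj_iff_of_outDeg_eq_two (h : outDeg A u = 2) :
    ∃ u₁ u₂, u₁ ≠ u₂ ∧ ∀ w, A u w ↔ w = u₁ ∨ w = u₂ := by
  obtain ⟨u₁, u₂, hne, hN⟩ := Set.ncard_eq_two.mp h
  exact ⟨u₁, u₂, hne, fun w => Set.ext_iff.mp hN w⟩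

section OutlierPartition

variable [Finite V] {m : ℕ}

lemma IsGeodetic.outlier_union_eq_of_adj (hgeo : IsGeodetic A k)
    (hO : ∀ u, (outlier A k u).ncard = m) (hS : 2 * m ≤ {v | inDeg A v < 2}.ncard)
    {u₁ u₂ : V} (h₁ : A u u₁) (h₂ : A u u₂) (hne : u₁ ≠ u₂) :
    {v | inDeg A v < 2} = outlier A k u₁ ∪ outlier A k u₂ ∧
      Disjoint (outlier A k u₁) (outlier A k u₂) := by
  refine Set.eq_union_and_disjoint_of_subset_union (Set.toFinite _) (Set.toFinite _)
    (fun s hs => ?_) (by rw [hO, hO]; omega)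
  exact hgeo.mem_outlier_union_of_adj
    (Set.ncard_le_one_iff_subsingleton.mp (Nat.le_of_lt_succ hs)) h₁ h₂ hne

lemma IsGeodetic.exists_adj (hgeo : IsGeodetic A k)
    (hO : ∀ u, (outlier A k u).ncard = m) (hS : 2 * m ≤ {v | inDeg A v < 2}.ncard)
    (hout : ∀ u, outDeg A u = 2) (v : V) : ∃ p, A p v := by
  by_contra! hv
  obtain ⟨u₁, u₂, hne, hN⟩ := exists_adj_iff_of_outDeg_eq_two (hout v)
  have h₁ : A v u₁ := (hN u₁).mpr (Or.inl rfl)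
  have h₂ : A v u₂ := (hN u₂).mpr (Or.inr rfl)
  have hmem : ∀ {w}, A v w → v ∈ outlier A k w :=
    fun hw hr => hv v (eq_of_forall_not_adj_of_reachIn hv hr ▸ hw)
  exact Set.disjoint_left.mp (hgeo.outlier_union_eq_of_adj hO hS h₁ h₂ hne).2
    (hmem h₁) (hmem h₂)

lemma IsGeodetic.exists_outlier_union_eq (hgeo : IsGeodetic A k)
    (hO : ∀ u, (outlier A k u).ncard = m) (hS : 2 * m ≤ {v | inDeg A v < 2}.ncard)
    (hout : ∀ u, outDeg A u = 2) (u : V) :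
    ∃ w, {v | inDeg A v < 2} = outlier A k u ∪ outlier A k w ∧
      Disjoint (outlier A k u) (outlier A k w) := by
  obtain ⟨p, hp⟩ := hgeo.exists_adj hO hS hout u
  obtain ⟨u₁, u₂, hne, hN⟩ := exists_adj_iff_of_outDeg_eq_two (hout p)
  have h₁ : A p u₁ := (hN u₁).mpr (Or.inl rfl)
  have h₂ : A p u₂ := (hN u₂).mpr (Or.inr rfl)
  rcases (hN u).mp hp with rfl | rfl
  · exact ⟨u₂, hgeo.outlier_union_eq_of_adj hO hS h₁ h₂ hne⟩
  · exact ⟨u₁, hgeo.outlier_union_eq_of_adj hO hS h₂ h₁ hne.symm⟩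

end OutlierPartition

end

/-- Let `G` be an out-regular degree-2 `k`-geodetic digraph of order
`M(2,k)+2` (`k ≥ 2`) with `|S| = 4`, where `S` is the set of vertices of in-degree `< 2`,
and suppose some `v'` has in-degree 4.  Then `S = N⁻(v')`, every outlier set is contained
in `S`, and if `Ω ⊆ S` is an outlier set of some vertex then `S − Ω` is also an outlier
set of some vertex. -/
theorem stmt9 {V : Type*} [Fintype V] (A : V → V → Prop) (k : ℕ) (hk : 2 ≤ k)
    (hgeo : IsGeodetic A k) (hout : ∀ u : V, outDeg A u = 2)
    (hcard : Fintype.card V = moore 2 k + 2)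
    (hS : {v : V | inDeg A v < 2}.ncard = 4)
    (v' : V) (hv' : inDeg A v' = 4) :
    {v : V | inDeg A v < 2} = {v : V | A v v'} ∧
    (∀ u : V, outlier A k u ⊆ {v : V | inDeg A v < 2}) ∧
    (∀ u : V, ∃ w : V, outlier A k w = {v : V | inDeg A v < 2} \ outlier A k u) := by
  obtain ⟨k, rfl⟩ : ∃ j, k = j + 1 := ⟨k - 1, by omega⟩
  have hO := hgeo.ncard_outlier hout hcard
  obtain ⟨u₀, hu₀⟩ : {t | A t v'}.Nonempty :=
    Set.nonempty_of_ncard_ne_zero (by change inDeg A v' ≠ 0; omega)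
  obtain ⟨u₁, u₂, hne, hN⟩ := exists_adj_iff_of_outDeg_eq_two (hout u₀)
  have h₁ : A u₀ u₁ := (hN u₁).mpr (Or.inl rfl)
  have h₂ : A u₀ u₂ := (hN u₂).mpr (Or.inr rfl)
  have hO_sub : ∀ {w}, A u₀ w → outlier A (k + 1) w ⊆ {t | A t v'} := fun hw =>
    hgeo.outlier_subset_of_not_adj (fun hwv => hgeo.not_adj_of_adj_of_adj hk hw hwv hu₀)
      (by rw [hout, hO, hv'])
  have hS_sub : {v | inDeg A v < 2} ⊆ {t | A t v'} := by
    rw [(hgeo.outlier_union_eq_of_adj hO hS.ge h₁ h₂ hne).1]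
    exact Set.union_subset (hO_sub h₁) (hO_sub h₂)
  refine ⟨Set.eq_of_subset_of_ncard_le hS_sub (by rw [hS]; exact hv'.le),
    fun u => ?_, fun u => ?_⟩
  · obtain ⟨w, hSw, -⟩ := hgeo.exists_outlier_union_eq hO hS.ge hout u
    exact hSw ▸ Set.subset_union_left
  · obtain ⟨w, hSw, hdisj⟩ := hgeo.exists_outlier_union_eq hO hS.ge hout u
    exact ⟨w, by rw [hSw, Set.union_sdiff_left, hdisj.symm.sdiff_eq_left]⟩
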